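/- Let P₁ < P₂ be real numbers with P₁ ≥ 2, and let n be a positive integer divisible by at least one prime in the interval [P₁, P₂]. Then Σ_{P₁ ≤ p ≤ P₂} Σ_{m : p·m = n} 1/(ω_{[P₁,P₂]}(m) + [p ∤ m]) = 1, where the outer sum is over primes p in [P₁, P₂], ω_{[P₁,P₂]}(m) denotes the number of distinct primes in [P₁, P₂] dividing m, and [p ∤ m] is 1 if p does not divide m and 0 otherwise. -/
import Mathlib


/-- Ramaré's identity: if `n` is divisible by at least one prime in `[P₁,P₂]`, then
`Σ_{P₁ ≤ p ≤ P₂} Σ_{m : pm = n} 1/(ω_{[P₁,P₂]}(m) + [p ∤ m]) = 1`. -/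
theorem ramare_identity (P₁ P₂ : ℝ) (hP₁ : 2 ≤ P₁) (hP : P₁ < P₂) (n : ℕ) (hn : 0 < n)
    (hdvd : ∃ p : ℕ, p.Prime ∧ p ∣ n ∧ P₁ ≤ (p : ℝ) ∧ (p : ℝ) ≤ P₂) :
    ∑ p ∈ n.primeFactors.filter (fun p : ℕ => P₁ ≤ (p : ℝ) ∧ (p : ℝ) ≤ P₂),
      (1 : ℝ) / ((((n / p).primeFactors.filter
            (fun q : ℕ => P₁ ≤ (q : ℝ) ∧ (q : ℝ) ≤ P₂)).card : ℝ)
          + (if p ∣ n / p then (0 : ℝ) else 1)) = 1 := by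
  classical
  set S := n.primeFactors.filter (fun p : ℕ => P₁ ≤ (p : ℝ) ∧ (p : ℝ) ≤ P₂) with hS
  have hSne : S.Nonempty := by
    obtain ⟨p, hp, hpd, h1, h2⟩ := hdvd
    exact ⟨p, by simp [hS, Nat.mem_primeFactors, hp, hpd, hn.ne', h1, h2]⟩
  have hpos : 1 ≤ S.card := Finset.card_pos.mpr hSne
  have hkey : ∀ p ∈ S, ((((n / p).primeFactors.filter
        (fun q : ℕ => P₁ ≤ (q : ℝ) ∧ (q : ℝ) ≤ P₂)).card : ℝ)
      + (if p ∣ n / p then (0:ℝ) else 1)) = (S.card : ℝ) := by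
    intro p hp
    obtain ⟨hpn, hpr⟩ := Finset.mem_filter.mp hp
    have hpp : p.Prime := Nat.prime_of_mem_primeFactors hpn
    have hpd : p ∣ n := Nat.dvd_of_mem_primeFactors hpn
    have hnp : n / p ≠ 0 := by
      have := Nat.div_pos (Nat.le_of_dvd hn hpd) hpp.pos
      omega
    have hmul : p * (n / p) = n := Nat.mul_div_cancel' hpd
    by_cases h : p ∣ n / p
    · have heq : (n / p).primeFactors = n.primeFactors := by
        ext q
        simp only [Nat.mem_primeFactors, hnp, hn.ne', ne_eq, not_false_iff, and_true]
        constructor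
        · rintro ⟨hq, hqd⟩; exact ⟨hq, hqd.trans (Nat.div_dvd_of_dvd hpd)⟩
        · rintro ⟨hq, hqd⟩
          refine ⟨hq, ?_⟩
          rcases eq_or_ne q p with rfl | hne
          · exact h
          · have hq' : q ∣ p * (n / p) := by rwa [hmul]
            rcases (Nat.Prime.dvd_mul hq).mp hq' with h' | h'
            · exact absurd ((Nat.prime_dvd_prime_iff_eq hq hpp).mp h') hne
            · exact h'
      simp [h, heq, ← hS]
    · have heq : (n / p).primeFactors = n.primeFactors.erase p := by
        ext q
        simp only [Finset.mem_erase, Nat.mem_primeFactors, hnp, hn.ne', ne_eq,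
          not_false_iff, and_true]
        constructor
        · rintro ⟨hq, hqd⟩
          refine ⟨?_, hq, hqd.trans (Nat.div_dvd_of_dvd hpd)⟩
          rintro rfl; exact h hqd
        · rintro ⟨hne, hq, hqd⟩
          refine ⟨hq, ?_⟩
          have hq' : q ∣ p * (n / p) := by rwa [hmul]
          rcases (Nat.Prime.dvd_mul hq).mp hq' with h' | h'
          · exact absurd ((Nat.prime_dvd_prime_iff_eq hq hpp).mp h') hne
          · exact h'
      rw [heq, Finset.filter_erase, if_neg h, ← hS,
        Finset.card_erase_of_mem hp]
      push_cast [Nat.cast_sub hpos]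
      ring
  rw [Finset.sum_congr rfl (fun p hp => by rw [hkey p hp])]
  rw [Finset.sum_const, nsmul_eq_mul]
  have h0 : (S.card : ℝ) ≠ 0 := by positivity
  field_simp
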